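/- arXiv:1808.05267 — 5 statements merged into one kernel-verified Lean document; each statement's English description precedes it below -/
import Mathlib

section
/- Let T be a triangulated category, S ⊆ T a pre-aisle, and t, t' objects of T. Then the relation R(t,t') on the class H̃_S(t,t') is an equivalence relation; in particular it is transitive: if (h,h') ∈ R(t,t') and (h',h'') ∈ R(t,t') then (h,h'') ∈ R(t,t'). -/
/-
Transitivity is the only real point. Given `h ~ h'` through `s₁` and `h' ~ h''` through `s₂`,
glue `s₁` and `s₂` along `h'.s` by a homotopy pushout: the cone `c` of
`h'.s ⟶ s₁ ⊞ s₂`. It lies in `S` because it is an extension of `Σ h'.s` by `s₁ ⊞ s₂`, and the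
two maps to `t'` agree on `h'.s`, so they factor through `c`.
-/

open CategoryTheory CategoryTheory.Limits CategoryTheory.Pretriangulated ZeroObject

universe v u

variable {C : Type u} [Category.{v} C] [Preadditive C] [HasZeroObject C]
  [HasShift C ℤ] [∀ n : ℤ, (CategoryTheory.shiftFunctor C n).Additive] [Pretriangulated C]
  [IsTriangulated C]

/-- A pre-aisle in a triangulated category: a full additive subcategory closed under
suspension, extensions and direct summands. -/
structure IsPreaisle (S : Set C) : Prop where
  zero_mem : (0 : C) ∈ S
  shift_mem : ∀ s ∈ S, (s⟦(1 : ℤ)⟧ : C) ∈ S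
  ext_mem : ∀ T : Triangle C, T ∈ (distTriang C) → T.obj₁ ∈ S → T.obj₃ ∈ S → T.obj₂ ∈ S
  summand_mem : ∀ x s : C, s ∈ S → ∀ (i : x ⟶ s) (r : s ⟶ x), i ≫ r = 𝟙 x → x ∈ S

/-- The class `H̃_S(t,t')` of pairs of composable morphisms `t ⟶ s ⟶ t'` with `s ∈ S`. -/
structure HTilde (S : Set C) (t t' : C) where
  s : C
  mem : s ∈ S
  f : t ⟶ s
  g : s ⟶ t'

/-- The relation `R(t,t')` on `H̃_S(t,t')`. -/
def HRel (S : Set C) {t t' : C} (h h' : HTilde S t t') : Prop :=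
  ∃ (s'' : C) (_ : s'' ∈ S) (u : h.s ⟶ s'') (u' : h'.s ⟶ s'') (v : s'' ⟶ t'),
    h.f ≫ u = h'.f ≫ u' ∧ u ≫ v = h.g ∧ u' ≫ v = h'.g

namespace IsPreaisle

variable {S : Set C}

lemma biprod_mem (hS : IsPreaisle S) {a b : C} (ha : a ∈ S) (hb : b ∈ S) : (a ⊞ b : C) ∈ S :=
  hS.ext_mem _ (binaryBiproductTriangle_distinguished a b) ha hb

lemma obj₃_mem (hS : IsPreaisle S) {T : Triangle C} (hT : T ∈ distTriang C)
    (h₁ : T.obj₁ ∈ S) (h₂ : T.obj₂ ∈ S) : T.obj₃ ∈ S :=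
  hS.ext_mem _ (rot_of_distTriang _ hT) h₂ (hS.shift_mem _ h₁)

lemma exists_weakPushout (hS : IsPreaisle S) {a b b' : C}
    (ha : a ∈ S) (hb : b ∈ S) (hb' : b' ∈ S) (u : a ⟶ b) (u' : a ⟶ b') :
    ∃ (c : C) (_ : c ∈ S) (p : b ⟶ c) (p' : b' ⟶ c), u ≫ p = u' ≫ p' ∧
      ∀ {x : C} (v : b ⟶ x) (v' : b' ⟶ x), u ≫ v = u' ≫ v' →
        ∃ w : c ⟶ x, p ≫ w = v ∧ p' ≫ w = v' := by
  obtain ⟨c, π, δ, hT⟩ := distinguished_cocone_triangle (biprod.lift u (-u'))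
  have hπ : biprod.lift u (-u') ≫ π = 0 := comp_distTriang_mor_zero₁₂ _ hT
  refine ⟨c, hS.obj₃_mem hT ha (hS.biprod_mem hb hb'), biprod.inl ≫ π, biprod.inr ≫ π,
    ?_, fun {x} v v' hvv' => ?_⟩
  · rw [biprod.lift_eq] at hπ
    simpa [add_neg_eq_zero] using hπ
  · obtain ⟨w, hw⟩ : ∃ w : c ⟶ x, biprod.desc v v' = π ≫ w :=
      Triangle.yoneda_exact₂ _ hT (biprod.desc v v') (by
        change biprod.lift u (-u') ≫ biprod.desc v v' = 0
        rw [biprod.lift_desc, Preadditive.neg_comp, hvv', add_neg_cancel])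
    exact ⟨w, by simp [← hw], by simp [← hw]⟩

end IsPreaisle

section HRel

variable {S : Set C} {t t' : C}

lemma HRel.refl (h : HTilde S t t') : HRel S h h :=
  ⟨h.s, h.mem, 𝟙 _, 𝟙 _, h.g, rfl, Category.id_comp _, Category.id_comp _⟩

lemma HRel.symm {h h' : HTilde S t t'} : HRel S h h' → HRel S h' h
  | ⟨s'', hs'', u, u', v, hf, hg, hg'⟩ => ⟨s'', hs'', u', u, v, hf.symm, hg', hg⟩

lemma HRel.trans (hS : IsPreaisle S) {h h' h'' : HTilde S t t'} :
    HRel S h h' → HRel S h' h'' → HRel S h h''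
  | ⟨s₁, hs₁, u₁, u₁', v₁, hf₁, hg₁, hg₁'⟩, ⟨s₂, hs₂, u₂, u₂', v₂, hf₂, hg₂, hg₂'⟩ => by
    obtain ⟨c, hc, p, p', hpp', hfactor⟩ := hS.exists_weakPushout h'.mem hs₁ hs₂ u₁' u₂
    obtain ⟨w, hpw, hp'w⟩ := hfactor v₁ v₂ (hg₁'.trans hg₂.symm)
    refine ⟨c, hc, u₁ ≫ p, u₂' ≫ p', w, ?_, by rw [Category.assoc, hpw, hg₁],
      by rw [Category.assoc, hp'w, hg₂']⟩
    calc h.f ≫ u₁ ≫ p = h'.f ≫ u₁' ≫ p := by rw [← Category.assoc, hf₁, Category.assoc]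
      _ = h'.f ≫ u₂ ≫ p' := by rw [hpp']
      _ = h''.f ≫ u₂' ≫ p' := by rw [← Category.assoc, hf₂, Category.assoc]

end HRel

/-- for a pre-aisle `S`, the relation `R(t,t')` is an equivalence relation;
in particular it is transitive. -/
theorem statement0 (S : Set C) (hS : IsPreaisle S) (t t' : C) :
    Equivalence (HRel S (t := t) (t' := t')) ∧
      ∀ h h' h'' : HTilde S t t', HRel S h h' → HRel S h' h'' → HRel S h h'' :=
  have hR : Equivalence (HRel S (t := t) (t' := t')) := ⟨HRel.refl, HRel.symm, HRel.trans hS⟩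
  ⟨hR, fun _ _ _ => hR.trans⟩
end

section
/- Let T be a triangulated category, S ⊆ T a pre-aisle, and t, t' objects of T. The addition on H_S(t,t') defined on representatives by sending the classes of (t →f s →g t') and (t →f' s' →g' t') to the class of (t →(f,f') s ⊕ s' →(g,g') t') is well defined (independent of the chosen representatives), commutative and associative; the class of (t → 0 → t') is a two-sided identity for it; and the class of (t →f s →g t') plus the class of (t →f s →(−g) t') equals the class of (t → 0 → t'). Hence H_S(t,t') is an abelian group. -/
open CategoryTheory CategoryTheory.Limits CategoryTheory.Pretriangulated ZeroObject

universe v u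

variable {C : Type u} [Category.{v} C] [Preadditive C] [HasZeroObject C]
  [HasShift C ℤ] [∀ n : ℤ, (CategoryTheory.shiftFunctor C n).Additive] [Pretriangulated C]
  [IsTriangulated C]

/-- The quotient `H_S(t,t')` of `H̃_S(t,t')` by the equivalence relation `R(t,t')`. -/
def HQuot (S : Set C) (t t' : C) := Quot (HRel S (t := t) (t' := t'))

/-!
The biproduct `s ⊞ s'` of two objects of `S` is again in `S`, being an extension of `s'` by `s`
via the split triangle, so sums of representatives stay in `H̃_S(t,t')`; related summands give
related sums by taking the biproduct of the two witnessing cospans. Each group law is witnessed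
by a single map between the middle objects compatible with both legs, except `h + (-h) ~ 0`,
where `fst - snd : s ⊞ s ⟶ s` kills `(f, f)` and turns `g` into `(g, -g)`.
-/

lemma IsPreaisle.biprod_mem_s3 {S : Set C} (hS : IsPreaisle S) {a b : C}
    (ha : a ∈ S) (hb : b ∈ S) : (a ⊞ b : C) ∈ S :=
  hS.ext_mem _ (binaryBiproductTriangle_distinguished a b) ha hb

namespace HTilde

variable {S : Set C} {t t' : C}

noncomputable def add (hS : IsPreaisle S) (h k : HTilde S t t') : HTilde S t t' :=
  ⟨h.s ⊞ k.s, hS.biprod_mem_s3 h.mem k.mem, biprod.lift h.f k.f, biprod.desc h.g k.g⟩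

noncomputable def zero (hS : IsPreaisle S) : HTilde S t t' := ⟨0, hS.zero_mem, 0, 0⟩

def neg (h : HTilde S t t') : HTilde S t t' := ⟨h.s, h.mem, h.f, -h.g⟩

end HTilde

namespace HRel

variable {S : Set C} {t t' : C}

lemma of_hom {h k : HTilde S t t'} (u : h.s ⟶ k.s) (hf : h.f ≫ u = k.f) (hg : u ≫ k.g = h.g) :
    HRel S h k :=
  ⟨k.s, k.mem, u, 𝟙 _, k.g, by simpa using hf, hg, Category.id_comp _⟩

lemma refl_s3 (h : HTilde S t t') : HRel S h h :=
  of_hom (𝟙 _) (Category.comp_id _) (Category.id_comp _)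

lemma add (hS : IsPreaisle S) {h h' k k' : HTilde S t t'} (rh : HRel S h h') (rk : HRel S k k') :
    HRel S (h.add hS k) (h'.add hS k') := by
  obtain ⟨w, hw, u, u', v, hf, hg, hg'⟩ := rh
  obtain ⟨x, hx, p, p', q, kf, kg, kg'⟩ := rk
  refine ⟨w ⊞ x, hS.biprod_mem_s3 hw hx, biprod.map u p, biprod.map u' p', biprod.desc v q,
    ?_, ?_, ?_⟩ <;>
  · dsimp only [HTilde.add]
    ext <;> simp [hf, hg, hg', kf, kg, kg']

lemma add_comm (hS : IsPreaisle S) (h k : HTilde S t t') : HRel S (h.add hS k) (k.add hS h) :=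
  of_hom (biprod.lift biprod.snd biprod.fst) (by dsimp only [HTilde.add]; ext <;> simp)
    (by dsimp only [HTilde.add]; ext <;> simp)

lemma add_assoc (hS : IsPreaisle S) (h k l : HTilde S t t') :
    HRel S ((h.add hS k).add hS l) (h.add hS (k.add hS l)) :=
  of_hom
    (biprod.lift (biprod.fst ≫ biprod.fst) (biprod.lift (biprod.fst ≫ biprod.snd) biprod.snd) :
      (h.s ⊞ k.s) ⊞ l.s ⟶ h.s ⊞ (k.s ⊞ l.s))
    (by dsimp only [HTilde.add]; ext <;> simp) (by dsimp only [HTilde.add]; ext <;> simp)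

lemma zero_add (hS : IsPreaisle S) (h : HTilde S t t') : HRel S ((HTilde.zero hS).add hS h) h :=
  of_hom biprod.snd (by simp [HTilde.add]) (by dsimp only [HTilde.add, HTilde.zero]; ext; simp)

lemma add_zero (hS : IsPreaisle S) (h : HTilde S t t') : HRel S (h.add hS (HTilde.zero hS)) h :=
  of_hom biprod.fst (by simp [HTilde.add]) (by dsimp only [HTilde.add, HTilde.zero]; ext; simp)

lemma add_neg (hS : IsPreaisle S) (h : HTilde S t t') :
    HRel S (h.add hS h.neg) (HTilde.zero hS) := by
  refine ⟨h.s, h.mem, biprod.fst - biprod.snd, 0, h.g, ?_, ?_, zero_comp⟩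
  · dsimp only [HTilde.add, HTilde.neg, HTilde.zero]
    rw [Preadditive.comp_sub, biprod.lift_fst, biprod.lift_snd, sub_self]
    exact zero_comp.symm
  · dsimp only [HTilde.add, HTilde.neg]
    ext <;> simp

end HRel

namespace HQuot

variable {S : Set C} {t t' : C}

noncomputable def add (hS : IsPreaisle S) : HQuot S t t' → HQuot S t t' → HQuot S t t' :=
  Quot.lift₂ (fun h k => Quot.mk _ (h.add hS k))
    (fun h _ _ rk => Quot.sound (.add hS (.refl h) rk))
    (fun _ _ k rh => Quot.sound (.add hS rh (.refl k)))

lemma add_mk (hS : IsPreaisle S) (h k : HTilde S t t') :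
    add hS (Quot.mk _ h) (Quot.mk _ k) = Quot.mk _ (h.add hS k) :=
  rfl

lemma add_comm (hS : IsPreaisle S) (a b : HQuot S t t') : add hS a b = add hS b a :=
  Quot.induction_on₂ a b fun h k => Quot.sound (.add_comm hS h k)

lemma add_assoc (hS : IsPreaisle S) (a b c : HQuot S t t') :
    add hS (add hS a b) c = add hS a (add hS b c) :=
  Quot.induction_on₃ a b c fun h k l => Quot.sound (.add_assoc hS h k l)

lemma zero_add (hS : IsPreaisle S) (a : HQuot S t t') :
    add hS (Quot.mk _ (HTilde.zero hS)) a = a :=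
  Quot.induction_on a fun h => Quot.sound (.zero_add hS h)

lemma add_zero (hS : IsPreaisle S) (a : HQuot S t t') :
    add hS a (Quot.mk _ (HTilde.zero hS)) = a :=
  Quot.induction_on a fun h => Quot.sound (.add_zero hS h)

lemma add_neg (hS : IsPreaisle S) (h : HTilde S t t') :
    add hS (Quot.mk _ h) (Quot.mk _ h.neg) = Quot.mk _ (HTilde.zero hS) :=
  Quot.sound (.add_neg hS h)

end HQuot

/-- the addition on `H_S(t,t')` defined via direct sums of representatives is
well defined, commutative and associative, admits the class of `t ⟶ 0 ⟶ t'` as a two-sided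
identity, and the class of `(f, g)` plus the class of `(f, -g)` is zero.  Hence `H_S(t,t')`
is an abelian group. -/
theorem statement3 (S : Set C) (hS : IsPreaisle S) (t t' : C) :
    ∃ add : HQuot S t t' → HQuot S t t' → HQuot S t t',
      (∀ h h' : HTilde S t t', ∃ m : (h.s ⊞ h'.s : C) ∈ S,
        add (Quot.mk _ h) (Quot.mk _ h') =
          Quot.mk _ ⟨h.s ⊞ h'.s, m, biprod.lift h.f h'.f, biprod.desc h.g h'.g⟩) ∧
      (∀ a b, add a b = add b a) ∧
      (∀ a b c, add (add a b) c = add a (add b c)) ∧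
      (∀ a, add (Quot.mk _ ⟨0, hS.zero_mem, 0, 0⟩) a = a) ∧
      (∀ a, add a (Quot.mk _ ⟨0, hS.zero_mem, 0, 0⟩) = a) ∧
      (∀ h : HTilde S t t',
        add (Quot.mk _ h) (Quot.mk _ ⟨h.s, h.mem, h.f, -h.g⟩) =
          Quot.mk _ ⟨0, hS.zero_mem, 0, 0⟩) :=
  ⟨HQuot.add hS, fun h k => ⟨hS.biprod_mem_s3 h.mem k.mem, HQuot.add_mk hS h k⟩,
    HQuot.add_comm hS, HQuot.add_assoc hS, HQuot.zero_add hS, HQuot.add_zero hS,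
    HQuot.add_neg hS⟩
end

section
/- Let T be a triangulated category with a t-structure (T^{≤0}, T^{≥0}) and put S = T^{≤0}. Then for all objects t, t' of T, the class H_S(t,t') is canonically isomorphic to Hom(t, (t')^{≤0}), where (t')^{≤0} → t' is the t-structure truncation: every class in H_S(t,t') has a unique representative of the form t →f (t')^{≤0} → t' with the second map the canonical truncation morphism. -/
open CategoryTheory CategoryTheory.Limits CategoryTheory.Pretriangulated ZeroObject

universe v u

variable {C : Type u} [Category.{v} C] [Preadditive C] [HasZeroObject C]
  [HasShift C ℤ] [∀ n : ℤ, (CategoryTheory.shiftFunctor C n).Additive] [Pretriangulated C]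
  [IsTriangulated C]

/-! Since `Hom(s, -)` kills `T^{≥1}` and its desuspension for `s ∈ T^{≤0}`, the long exact
sequence of the truncation triangle makes `i : (t')^{≤0} ⟶ t'` a coreflection of `t'` into
`S = T^{≤0}`: every `g : s ⟶ t'` with `s ∈ S` lifts uniquely through `i`. For any coreflection
`i : a ⟶ t'`, sending `t →f s →g t'` to `f` followed by the lift of `g` is invariant under
`R(t,t')` and inverse to `f ↦ [t →f a →i t']`. -/

namespace CategoryTheory

variable {D : Type*} [Category D] [Preadditive D] [HasZeroObject D] [HasShift D ℤ]
  [∀ n : ℤ, (CategoryTheory.shiftFunctor D n).Additive] [Pretriangulated D]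

lemma Pretriangulated.Triangle.existsUnique_comp_mor₁_eq (T : Triangle D)
    (hT : T ∈ distTriang D) {X : D} (h₃ : ∀ f : X ⟶ T.obj₃, f = 0)
    (h₃' : ∀ f : X ⟶ T.obj₃⟦(-1 : ℤ)⟧, f = 0) (g : X ⟶ T.obj₂) :
    ∃! l : X ⟶ T.obj₁, l ≫ T.mor₁ = g := by
  obtain ⟨l, rfl⟩ := coyoneda_exact₂ T hT g (h₃ _)
  refine ⟨l, rfl, fun l' (hl' : l' ≫ T.mor₁ = l ≫ T.mor₁) => ?_⟩
  obtain ⟨e, he⟩ := coyoneda_exact₂ _ (inv_rot_of_distTriang _ hT) (l' - l)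
    (show (l' - l) ≫ T.mor₁ = 0 by rw [Preadditive.sub_comp, hl', sub_self])
  rw [← sub_eq_zero, he, h₃' e]
  exact zero_comp

lemma Triangulated.TStructure.existsUnique_comp_mor₁_eq (τ : TStructure D) (T : Triangle D)
    (hT : T ∈ distTriang D) {n₀ n₁ : ℤ} (h : n₀ < n₁) (hT₃ : τ.ge n₁ T.obj₃) {X : D}
    (hX : τ.le n₀ X) (g : X ⟶ T.obj₂) : ∃! l : X ⟶ T.obj₁, l ≫ T.mor₁ = g := by
  have : τ.IsLE X n₀ := ⟨hX⟩
  have : τ.IsGE T.obj₃ n₁ := ⟨hT₃⟩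
  have : τ.IsGE (T.obj₃⟦(-1 : ℤ)⟧) (n₁ + 1) := τ.isGE_shift _ n₁ (-1) (n₁ + 1)
  exact T.existsUnique_comp_mor₁_eq hT (fun f => τ.zero f n₀ n₁ h)
    (fun f => τ.zero f n₀ (n₁ + 1)) g

end CategoryTheory

section Coreflection

variable {D : Type*} [Category D]

def IsCoreflection (S : Set D) {a t' : D} (i : a ⟶ t') : Prop :=
  ∀ ⦃s : D⦄, s ∈ S → ∀ g : s ⟶ t', ∃! l : s ⟶ a, l ≫ i = g

namespace IsCoreflection

variable {S : Set D} {a t' s : D} {i : a ⟶ t'}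

noncomputable def lift (hi : IsCoreflection S i) (hs : s ∈ S) (g : s ⟶ t') : s ⟶ a :=
  (hi hs g).exists.choose

lemma lift_comp (hi : IsCoreflection S i) (hs : s ∈ S) (g : s ⟶ t') : hi.lift hs g ≫ i = g :=
  (hi hs g).exists.choose_spec

lemma eq_lift (hi : IsCoreflection S i) (hs : s ∈ S) {g : s ⟶ t'} {l : s ⟶ a}
    (hl : l ≫ i = g) : l = hi.lift hs g :=
  (hi hs g).unique hl (hi.lift_comp hs g)

lemma comp_lift (hi : IsCoreflection S i) {s'' : D} (hs : s ∈ S) (hs'' : s'' ∈ S)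
    (u : s ⟶ s'') (v : s'' ⟶ t') : u ≫ hi.lift hs'' v = hi.lift hs (u ≫ v) :=
  hi.eq_lift hs (by rw [Category.assoc, lift_comp])

end IsCoreflection

namespace HTilde

variable {S : Set D} {t t' a : D} {i : a ⟶ t'}

noncomputable def toHom (hi : IsCoreflection S i) (h : HTilde S t t') : t ⟶ a :=
  h.f ≫ hi.lift h.mem h.g

lemma toHom_eq_of_hRel (hi : IsCoreflection S i) {h h' : HTilde S t t'} (hR : HRel S h h') :
    h.toHom hi = h'.toHom hi := by
  obtain ⟨s'', hs'', u, u', v, hf, hu, hu'⟩ := hR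
  calc h.f ≫ hi.lift h.mem h.g
      = (h.f ≫ u) ≫ hi.lift hs'' v := by rw [Category.assoc, hi.comp_lift h.mem, hu]
    _ = (h'.f ≫ u') ≫ hi.lift hs'' v := by rw [hf]
    _ = h'.f ≫ hi.lift h'.mem h'.g := by rw [Category.assoc, hi.comp_lift h'.mem, hu']

lemma hRel_mk_toHom (hi : IsCoreflection S i) (ha : a ∈ S) (h : HTilde S t t') :
    HRel S h ⟨a, ha, h.toHom hi, i⟩ :=
  ⟨a, ha, hi.lift h.mem h.g, 𝟙 a, i, (Category.comp_id _).symm, hi.lift_comp _ _,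
    Category.id_comp i⟩

lemma toHom_mk (hi : IsCoreflection S i) (ha : a ∈ S) (f : t ⟶ a) :
    (⟨a, ha, f, i⟩ : HTilde S t t').toHom hi = f := by
  rw [toHom, ← hi.eq_lift ha (Category.id_comp i), Category.comp_id]

end HTilde

lemma HQuot.existsUnique_eq_mk {S : Set D} {t t' a : D} (ha : a ∈ S) {i : a ⟶ t'}
    (hi : IsCoreflection S i) (q : HQuot S t t') :
    ∃! f : t ⟶ a, q = Quot.mk _ ⟨a, ha, f, i⟩ := by
  induction q using Quot.ind with
  | mk h =>
    refine ⟨h.toHom hi, Quot.sound (h.hRel_mk_toHom hi ha), fun f hf => ?_⟩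
    have : h.toHom hi = (⟨a, ha, f, i⟩ : HTilde S t t').toHom hi :=
      congrArg (Quot.lift (HTilde.toHom hi) fun _ _ => HTilde.toHom_eq_of_hRel hi) hf
    rw [this, HTilde.toHom_mk]

end Coreflection

/-- for the pre-aisle `S = T^{≤0}` of a t-structure, `H_S(t,t')` is canonically
isomorphic to `Hom(t, (t')^{≤0})`: every class has a unique representative of the form
`t ⟶ (t')^{≤0} ⟶ t'` whose second map is the canonical truncation morphism. -/
theorem statement7 (τ : Triangulated.TStructure C) (t t' : C)
    (tle : C) (hle : τ.le 0 tle) (tge : C) (hge : τ.ge 1 tge)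
    (i : tle ⟶ t') (p : t' ⟶ tge) (d : tge ⟶ tle⟦(1 : ℤ)⟧)
    (hT : Triangle.mk i p d ∈ (distTriang C)) :
    ∀ q : HQuot {x : C | τ.le 0 x} t t',
      ∃! f : t ⟶ tle, q = Quot.mk _ ⟨tle, hle, f, i⟩ :=
  HQuot.existsUnique_eq_mk hle fun _ hs =>
    τ.existsUnique_comp_mor₁_eq _ hT zero_lt_one hge hs
end

section
/- Let T be a triangulated category, S ⊆ T a pre-aisle, t an object of T, and suppose there is an isomorphism of functors Hom(−,x) ≅ H_S(−,t) for some object x of T. Then x belongs to S. -/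
open CategoryTheory CategoryTheory.Limits CategoryTheory.Pretriangulated ZeroObject

universe v u

variable {C : Type u} [Category.{v} C] [Preadditive C] [HasZeroObject C]
  [HasShift C ℤ] [∀ n : ℤ, (CategoryTheory.shiftFunctor C n).Additive] [Pretriangulated C]
  [IsTriangulated C]

section

omit [Preadditive C] [HasZeroObject C] [HasShift C ℤ] [∀ n : ℤ, (shiftFunctor C n).Additive]
  [Pretriangulated C] [IsTriangulated C]

def HTilde.precomp {S : Set C} {y y' t : C} (e : y' ⟶ y) (h : HTilde S y t) : HTilde S y' t :=
  ⟨h.s, h.mem, e ≫ h.f, h.g⟩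

theorem HRel.precomp {S : Set C} {y y' t : C} (e : y' ⟶ y) {a b : HTilde S y t}
    (hab : HRel S a b) : HRel S (a.precomp e) (b.precomp e) := by
  obtain ⟨s'', hs'', u, u', v, hf, hu, hu'⟩ := hab
  exact ⟨s'', hs'', u, u', v, by simp only [HTilde.precomp, Category.assoc, hf], hu, hu'⟩

def HQuot.precomp {S : Set C} {y y' t : C} (e : y' ⟶ y) : HQuot S y t → HQuot S y' t :=
  Quot.map (HTilde.precomp e) fun _ _ ↦ HRel.precomp e

theorem HQuot.precomp_mk {S : Set C} {y y' t : C} (e : y' ⟶ y) (h : HTilde S y t) :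
    HQuot.precomp e (Quot.mk _ h) = Quot.mk _ (h.precomp e) :=
  rfl

def HQuot.IsNatural {S : Set C} {t x : C} (φ : ∀ y : C, (y ⟶ x) → HQuot S y t) : Prop :=
  ∀ {y' y : C} (e : y' ⟶ y) (g : y ⟶ x) (h : HTilde S y t),
    φ y g = Quot.mk _ h → φ y' (e ≫ g) = Quot.mk _ (h.precomp e)

theorem HQuot.IsNatural.apply_comp {S : Set C} {t x : C} {φ : ∀ y : C, (y ⟶ x) → HQuot S y t}
    (hnat : HQuot.IsNatural φ) {y y' : C} (e : y' ⟶ y) (g : y ⟶ x) :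
    φ y' (e ≫ g) = HQuot.precomp e (φ y g) := by
  obtain ⟨h, hh⟩ := Quot.exists_rep (φ y g)
  rw [← hh, hnat e g h hh.symm, HQuot.precomp_mk]

/-- Yoneda: `x` is a retract of the middle object `s` of a representative `x ⟶ s ⟶ t` of the
universal element `φ x (𝟙 x)`. -/
theorem exists_retract_of_bijective_natural {S : Set C} {t x : C}
    (φ : ∀ y : C, (y ⟶ x) → HQuot S y t) (hbij : ∀ y : C, Function.Bijective (φ y))
    (hnat : HQuot.IsNatural φ) :
    ∃ s ∈ S, ∃ (i : x ⟶ s) (r : s ⟶ x), i ≫ r = 𝟙 x := by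
  obtain ⟨⟨s, hs, f, g⟩, hfg⟩ := Quot.exists_rep (φ x (𝟙 x))
  obtain ⟨r, hr⟩ := (hbij s).2 (Quot.mk _ ⟨s, hs, 𝟙 s, g⟩)
  refine ⟨s, hs, f, r, (hbij x).1 ?_⟩
  calc φ x (f ≫ r) = HQuot.precomp f (φ s r) := hnat.apply_comp f r
    _ = HQuot.precomp f (Quot.mk _ ⟨s, hs, 𝟙 s, g⟩) := by rw [hr]
    _ = φ x (𝟙 x) := by rw [HQuot.precomp_mk, HTilde.precomp, Category.comp_id, hfg]

end

/-- if `Hom(-,x) ≅ H_S(-,t)` as functors (a natural family of bijections,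
where `H_S(-,t)` acts on morphisms by precomposing representatives), then `x ∈ S`. -/
theorem statement8 (S : Set C) (hS : IsPreaisle S) (t x : C)
    (φ : ∀ y : C, (y ⟶ x) → HQuot S y t)
    (hbij : ∀ y : C, Function.Bijective (φ y))
    (hnat : ∀ {y' y : C} (e : y' ⟶ y) (g : y ⟶ x) (h : HTilde S y t),
      φ y g = Quot.mk _ h → φ y' (e ≫ g) = Quot.mk _ ⟨h.s, h.mem, e ≫ h.f, h.g⟩) :
    x ∈ S := by
  obtain ⟨s, hs, i, r, hir⟩ := exists_retract_of_bijective_natural φ hbij hnat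
  exact hS.summand_mem x s hs i r hir
end

section
/- Let T be a triangulated category with coproducts, S ⊆ T a set of objects, α a regular cardinal such that T is α-compactly generated and S ⊆ T^α, and let S(α) be the subcategory of Construction 2.1. Then: S ⊆ S(α) ⊆ T^α ∩ ⟨S⟩^{≤0}; Σ S(α) ⊆ S(α); S(α) * S(α) = S(α); and any coproduct of fewer than α objects of S(α) lies in S(α). -/
open CategoryTheory CategoryTheory.Limits CategoryTheory.Pretriangulated ZeroObject

universe v u

variable {C : Type u} [Category.{v} C] [Preadditive C] [HasZeroObject C]
  [HasShift C ℤ] [∀ n : ℤ, (CategoryTheory.shiftFunctor C n).Additive] [Pretriangulated C]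
  [IsTriangulated C] [HasCoproducts.{v} C]

/-- A cocomplete pre-aisle: a pre-aisle that is moreover closed under all coproducts. -/
def IsCocompletePreaisle (S : Set C) : Prop :=
  IsPreaisle S ∧ ∀ {ι : Type v} (xs : ι → C), (∀ i, xs i ∈ S) → (∐ xs : C) ∈ S

/-- `⟨S⟩^{≤0}`: the smallest cocomplete pre-aisle containing `S`. -/
def aisleGen (S : Set C) : Set C :=
  ⋂₀ {P : Set C | IsCocompletePreaisle P ∧ S ⊆ P}

/-- `A * B`: the class of objects `y` fitting in a distinguished triangle `a ⟶ y ⟶ b ⟶ Σa`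
with `a ∈ A` and `b ∈ B`. -/
def starSet (A B : Set C) : Set C :=
  {y | ∃ (a : C) (_ : a ∈ A) (b : C) (_ : b ∈ B) (f : a ⟶ y) (g : y ⟶ b)
    (h : b ⟶ (a⟦(1 : ℤ)⟧ : C)), Triangle.mk f g h ∈ (distTriang C)}

/-- The class of coproducts of fewer than `α` objects of `A`. -/
def smallCoprodSet (α : Cardinal.{v}) (A : Set C) : Set C :=
  {y | ∃ (ι : Type v) (_ : Cardinal.mk ι < α) (xs : ι → C) (_ : ∀ i, xs i ∈ A),
    Nonempty ((∐ xs : C) ≅ y)}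

/-- The class `∪_{j ≥ 0} Σʲ S` of all nonnegative suspensions of objects of `S`. -/
def suspSet (S : Set C) : Set C :=
  {y | ∃ (j : ℕ) (x : C), x ∈ S ∧ y = (x⟦(j : ℤ)⟧ : C)}

/-- Construction 2.1, by transfinite induction (with the indexing shifted by one:
`SClass α S 0` is the paper's `S(1)`): the base stage consists of the coproducts of fewer
than `α` objects of `∪_j Σʲ S`; the stage at a successor consists of the coproducts of
fewer than `α` objects of `S(i) * S(i)`; and the stage at a limit ordinal is the union of
the earlier stages. -/
noncomputable def SClass (α : Cardinal.{v}) (S : Set C) (i : Ordinal.{v}) : Set C :=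
  Ordinal.limitRecOn i (smallCoprodSet α (suspSet S))
    (fun _ prev => smallCoprodSet α (starSet prev prev))
    (fun o _ ih => {y | ∃ (o' : Ordinal.{v}) (h : o' < o), y ∈ ih o' h})

/-- The paper's `S(α)`: the stage of Construction 2.1 at the ordinal `α`. -/
noncomputable def SAlpha (α : Cardinal.{v}) (S : Set C) : Set C :=
  SClass α S (Cardinal.ord α)

/-- Data exhibiting the triangulated category `C` as `α`-compactly generated, `compacts`
playing the role of the subcategory `T^α` of `α`-compact objects: an essentially small
triangulated subcategory, closed under coproducts of fewer than `α` objects, generating,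
and such that any morphism from one of its objects to a coproduct factors through a
sub-coproduct of fewer than `α` of the summands via `α`-compact intermediaries. -/
structure AlphaCompactGeneration (α : Cardinal.{v}) where
  compacts : Set C
  zero_mem : (0 : C) ∈ compacts
  iso_mem : ∀ x y : C, x ∈ compacts → (x ≅ y) → y ∈ compacts
  shift_mem : ∀ x ∈ compacts, ∀ n : ℤ, (x⟦n⟧ : C) ∈ compacts
  cone_mem : ∀ T : Triangle C, T ∈ (distTriang C) → T.obj₁ ∈ compacts →
    T.obj₂ ∈ compacts → T.obj₃ ∈ compacts
  smallCoprod_mem : ∀ {ι : Type v}, Cardinal.mk ι < α → ∀ xs : ι → C,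
    (∀ i, xs i ∈ compacts) → (∐ xs : C) ∈ compacts
  essentiallySmall : ∃ (ι : Type v) (f : ι → C), ∀ x ∈ compacts, ∃ i, Nonempty (x ≅ f i)
  factor : ∀ t ∈ compacts, ∀ {ι : Type v} (xs : ι → C) (f : t ⟶ ∐ xs),
    ∃ (J : Set ι) (_ : Cardinal.mk J < α) (ts : ι → C) (_ : ∀ i, ts i ∈ compacts)
      (_ : ∀ i ∉ J, IsZero (ts i)) (g : t ⟶ ∐ ts) (fs : ∀ i, ts i ⟶ xs i),
      f = g ≫ Limits.Sigma.map fs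
  generating : ∀ x : C, (∀ t ∈ compacts, ∀ f : t ⟶ x, f = 0) → IsZero x

/-! Each construction step (nonnegative suspensions, extensions, coproducts of fewer than `α`
objects) preserves both `T^α` and every cocomplete pre-aisle containing `S`, so every stage
`S(i)` lies in `T^α ∩ ⟨S⟩^{≤0}`. Since `0 ∈ S(i)`, we have `S(i) ⊆ S(i) * S(i)`, so the stages
increase; and `Σ` commutes with coproducts and with rotation of triangles, so every stage is
`Σ`-closed. Finally `α.ord` is a limit ordinal of cofinality `α`: two, or fewer than `α`, objects
of `S(α)` already lie in a common stage `S(i)` with `i < α.ord`, and their extensions, resp.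
their coproduct, lie in `S(i + 1)`. -/

open Cardinal

section Suspension

variable {C : Type u} [Category.{v} C] [HasShift C ℤ]

lemma shift_mem_suspSet {S : Set C} {y : C} (hy : y ∈ suspSet S) :
    ∃ z ∈ suspSet S, Nonempty (z ≅ (y⟦(1 : ℤ)⟧ : C)) := by
  obtain ⟨j, x, hx, rfl⟩ := hy
  exact ⟨_, ⟨j + 1, x, hx, rfl⟩,
    ⟨(shiftFunctorAdd' C (j : ℤ) 1 ((j + 1 : ℕ) : ℤ) (by push_cast; ring)).app x⟩⟩

end Suspension

section SmallCoproducts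

variable {C : Type u} [Category.{v} C] [HasCoproducts.{v} C] {α : Cardinal.{v}}

lemma zero_mem_smallCoprodSet [HasZeroMorphisms C] [HasZeroObject C] (hα : 0 < α) (A : Set C) :
    (0 : C) ∈ smallCoprodSet α A := by
  refine ⟨PEmpty, by simpa using hα, PEmpty.elim, PEmpty.rec, ⟨IsZero.isoZero ?_⟩⟩
  rw [IsZero.iff_id_eq_zero]
  exact Sigma.hom_ext _ _ PEmpty.rec

lemma mem_smallCoprodSet_of_iso (hα : 1 < α) {A : Set C} {x y : C} (hx : x ∈ A) (e : x ≅ y) :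
    y ∈ smallCoprodSet α A :=
  ⟨PUnit, by simpa using hα, fun _ => x, fun _ => hx, ⟨coproductUniqueIso _ ≪≫ e⟩⟩

lemma smallCoprodSet_subset {A P : Set C} (hiso : ∀ {x y : C}, x ∈ P → (x ≅ y) → y ∈ P)
    (hsigma : ∀ {ι : Type v}, #ι < α → ∀ xs : ι → C, (∀ i, xs i ∈ P) → (∐ xs : C) ∈ P)
    (hA : A ⊆ P) : smallCoprodSet α A ⊆ P := by
  rintro y ⟨ι, hι, xs, hxs, ⟨e⟩⟩
  exact hiso (hsigma hι xs fun i => hA (hxs i)) e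

lemma shift_mem_smallCoprodSet [HasShift C ℤ] {A : Set C}
    (hA : ∀ a ∈ A, ∃ b ∈ A, Nonempty (b ≅ (a⟦(1 : ℤ)⟧ : C))) {y : C}
    (hy : y ∈ smallCoprodSet α A) : (y⟦(1 : ℤ)⟧ : C) ∈ smallCoprodSet α A := by
  obtain ⟨ι, hι, xs, hxs, ⟨e⟩⟩ := hy
  choose ys hys e' using fun i => hA (xs i) (hxs i)
  exact ⟨ι, hι, ys, hys, ⟨Sigma.mapIso (fun i => (e' i).some) ≪≫
    (PreservesCoproduct.iso (shiftFunctor C (1 : ℤ)) xs).symm ≪≫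
    (shiftFunctor C (1 : ℤ)).mapIso e⟩⟩

end SmallCoproducts

section Pretriangulated

variable {C : Type u} [Category.{v} C] [Preadditive C] [HasZeroObject C]
  [HasShift C ℤ] [∀ n : ℤ, (CategoryTheory.shiftFunctor C n).Additive] [Pretriangulated C]

lemma shift_mem_starSet {A B : Set C} (hA : ∀ a ∈ A, (a⟦(1 : ℤ)⟧ : C) ∈ A)
    (hB : ∀ b ∈ B, (b⟦(1 : ℤ)⟧ : C) ∈ B) {y : C} (hy : y ∈ starSet A B) :
    (y⟦(1 : ℤ)⟧ : C) ∈ starSet A B := by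
  obtain ⟨a, ha, b, hb, f, g, h, hT⟩ := hy
  -- rotating three times is the shift of the triangle, up to signs
  exact ⟨a⟦(1 : ℤ)⟧, hA a ha, b⟦(1 : ℤ)⟧, hB b hb, _, _, _,
    rot_of_distTriang _ (rot_of_distTriang _ (rot_of_distTriang _ hT))⟩

lemma mem_starSet_of_mem_left {A B : Set C} {y : C} (hy : y ∈ A) (hB : (0 : C) ∈ B) :
    y ∈ starSet A B :=
  ⟨y, hy, 0, hB, 𝟙 y, 0, 0, contractible_distinguished y⟩

lemma IsPreaisle.mem_of_iso {P : Set C} (hP : IsPreaisle P) {x y : C} (hx : x ∈ P) (e : x ≅ y) :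
    y ∈ P :=
  hP.summand_mem y x hx e.inv e.hom e.inv_hom_id

end Pretriangulated

section Construction

variable {C : Type u} [Category.{v} C] [Preadditive C] [HasZeroObject C]
  [HasShift C ℤ] [∀ n : ℤ, (CategoryTheory.shiftFunctor C n).Additive] [Pretriangulated C]
  [HasCoproducts.{v} C]

variable {α : Cardinal.{v}} {S : Set C}

lemma SClass_zero : SClass α S 0 = smallCoprodSet α (suspSet S) :=
  Ordinal.limitRecOn_zero _ _ _

lemma SClass_add_one (o : Ordinal.{v}) :
    SClass α S (o + 1) = smallCoprodSet α (starSet (SClass α S o) (SClass α S o)) :=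
  Ordinal.limitRecOn_add_one _ _ _ _

lemma SClass_limit {o : Ordinal.{v}} (ho : Order.IsSuccLimit o) :
    SClass α S o = {y | ∃ (o' : Ordinal.{v}) (_ : o' < o), y ∈ SClass α S o'} :=
  Ordinal.limitRecOn_limit _ _ _ _ ho

lemma zero_mem_SClass (hα : 0 < α) (o : Ordinal.{v}) : (0 : C) ∈ SClass α S o := by
  induction o using Ordinal.limitRecOn with
  | zero => rw [SClass_zero]; exact zero_mem_smallCoprodSet hα _
  | add_one o _ => rw [SClass_add_one]; exact zero_mem_smallCoprodSet hα _
  | limit o ho ih => rw [SClass_limit ho]; exact ⟨0, ho.bot_lt, ih 0 ho.bot_lt⟩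

lemma starSet_SClass_subset (hα : 1 < α) (o : Ordinal.{v}) :
    starSet (SClass α S o) (SClass α S o) ⊆ SClass α S (o + 1) := by
  rw [SClass_add_one]
  exact fun y hy => mem_smallCoprodSet_of_iso hα hy (Iso.refl y)

lemma SClass_mono (hα : 1 < α) {i j : Ordinal.{v}} (hij : i ≤ j) :
    SClass α S i ⊆ SClass α S j := by
  induction j using Ordinal.limitRecOn with
  | zero => rw [nonpos_iff_eq_zero.mp hij]
  | add_one o ih =>
      rcases hij.lt_or_eq with h | rfl
      · refine (ih (Order.lt_add_one_iff.mp h)).trans fun y hy => ?_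
        exact starSet_SClass_subset hα o
          (mem_starSet_of_mem_left hy (zero_mem_SClass (zero_lt_one.trans hα) o))
      · exact subset_rfl
  | limit o ho _ =>
      rcases hij.lt_or_eq with h | rfl
      · rw [SClass_limit ho]
        exact fun y hy => ⟨i, h, hy⟩
      · exact subset_rfl

lemma shift_mem_SClass (o : Ordinal.{v}) :
    ∀ y ∈ SClass α S o, (y⟦(1 : ℤ)⟧ : C) ∈ SClass α S o := by
  induction o using Ordinal.limitRecOn with
  | zero =>
      rw [SClass_zero]
      exact fun y => shift_mem_smallCoprodSet fun _ => shift_mem_suspSet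
  | add_one o ih =>
      rw [SClass_add_one]
      exact fun y => shift_mem_smallCoprodSet fun a ha =>
        ⟨_, shift_mem_starSet ih ih ha, ⟨Iso.refl _⟩⟩
  | limit o ho ih =>
      rw [SClass_limit ho]
      rintro y ⟨o', ho', hy⟩
      exact ⟨o', ho', ih o' ho' y hy⟩

lemma sigma_mem_SClass_add_one (hα : 0 < α) {ι : Type v} (hι : #ι < α) (xs : ι → C)
    {o : Ordinal.{v}} (hxs : ∀ i, xs i ∈ SClass α S o) : (∐ xs : C) ∈ SClass α S (o + 1) := by
  rw [SClass_add_one]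
  exact ⟨ι, hι, xs, fun i => mem_starSet_of_mem_left (hxs i) (zero_mem_SClass hα o),
    ⟨Iso.refl _⟩⟩

lemma SClass_subset {P : Set C} (hiso : ∀ {x y : C}, x ∈ P → (x ≅ y) → y ∈ P)
    (hsigma : ∀ {ι : Type v}, #ι < α → ∀ xs : ι → C, (∀ i, xs i ∈ P) → (∐ xs : C) ∈ P)
    (hshift : ∀ x ∈ P, (x⟦(1 : ℤ)⟧ : C) ∈ P)
    (hext : ∀ T ∈ distTriang C, T.obj₁ ∈ P → T.obj₃ ∈ P → T.obj₂ ∈ P)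
    (hSP : S ⊆ P) (o : Ordinal.{v}) : SClass α S o ⊆ P := by
  induction o using Ordinal.limitRecOn with
  | zero =>
      rw [SClass_zero]
      refine smallCoprodSet_subset hiso hsigma ?_
      rintro _ ⟨j, x, hx, rfl⟩
      induction j with
      | zero => exact hiso (hSP hx) ((shiftFunctorZero' C ((0 : ℕ) : ℤ) rfl).app x).symm
      | succ j ih =>
          exact hiso (hshift _ ih)
            ((shiftFunctorAdd' C (j : ℤ) 1 ((j + 1 : ℕ) : ℤ) (by push_cast; ring)).app x).symm
  | add_one o ih =>
      rw [SClass_add_one]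
      refine smallCoprodSet_subset hiso hsigma ?_
      rintro y ⟨a, ha, b, hb, f, g, h, hT⟩
      exact hext _ hT (ih ha) (ih hb)
  | limit o ho ih =>
      rw [SClass_limit ho]
      rintro y ⟨o', ho', hy⟩
      exact ih o' ho' hy

lemma AlphaCompactGeneration.ext_mem (G : AlphaCompactGeneration (C := C) α)
    (T : Triangle C) (hT : T ∈ distTriang C) (h₁ : T.obj₁ ∈ G.compacts)
    (h₃ : T.obj₃ ∈ G.compacts) : T.obj₂ ∈ G.compacts :=
  G.cone_mem _ (inv_rot_of_distTriang _ hT) (G.shift_mem _ h₃ (-1)) h₁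

lemma SAlpha_subset_compacts (G : AlphaCompactGeneration (C := C) α) (hS : S ⊆ G.compacts) :
    SAlpha α S ⊆ G.compacts :=
  SClass_subset (G.iso_mem _ _) G.smallCoprod_mem (fun x hx => G.shift_mem x hx 1) G.ext_mem hS _

lemma SAlpha_subset_aisleGen : SAlpha α S ⊆ aisleGen S :=
  Set.subset_sInter fun _ ⟨hP, hSP⟩ =>
    SClass_subset hP.1.mem_of_iso (fun _ xs hxs => hP.2 xs hxs) hP.1.shift_mem hP.1.ext_mem hSP _

lemma shift_mem_SAlpha : ∀ y ∈ SAlpha α S, (y⟦(1 : ℤ)⟧ : C) ∈ SAlpha α S :=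
  shift_mem_SClass _

lemma mem_SAlpha_iff (hα : ℵ₀ ≤ α) {y : C} : y ∈ SAlpha α S ↔ ∃ o < α.ord, y ∈ SClass α S o := by
  rw [SAlpha, SClass_limit (isSuccLimit_ord hα)]
  exact exists_congr fun _ => exists_prop

lemma subset_SAlpha (hα : ℵ₀ ≤ α) : S ⊆ SAlpha α S := by
  intro x hx
  refine (mem_SAlpha_iff hα).2 ⟨0, (isSuccLimit_ord hα).bot_lt, ?_⟩
  rw [SClass_zero]
  exact mem_smallCoprodSet_of_iso (one_lt_aleph0.trans_le hα) ⟨0, x, hx, rfl⟩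
    ((shiftFunctorZero' C ((0 : ℕ) : ℤ) rfl).app x)

lemma starSet_SAlpha (hα : ℵ₀ ≤ α) : starSet (SAlpha α S) (SAlpha α S) = SAlpha α S := by
  have h1 : 1 < α := one_lt_aleph0.trans_le hα
  refine subset_antisymm ?_ fun y hy =>
    mem_starSet_of_mem_left hy (zero_mem_SClass (zero_lt_one.trans h1) _)
  rintro y ⟨a, ha, b, hb, f, g, h, hT⟩
  obtain ⟨i, hi, ha⟩ := (mem_SAlpha_iff hα).1 ha
  obtain ⟨j, hj, hb⟩ := (mem_SAlpha_iff hα).1 hb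
  refine (mem_SAlpha_iff hα).2 ⟨max i j + 1, (isSuccLimit_ord hα).add_one_lt (max_lt hi hj), ?_⟩
  exact starSet_SClass_subset h1 _ ⟨a, SClass_mono h1 (le_max_left i j) ha,
    b, SClass_mono h1 (le_max_right i j) hb, f, g, h, hT⟩

lemma sigma_mem_SAlpha (hα : α.IsRegular) {ι : Type v} (hι : #ι < α) (xs : ι → C)
    (hxs : ∀ i, xs i ∈ SAlpha α S) : (∐ xs : C) ∈ SAlpha α S := by
  have h1 : 1 < α := one_lt_aleph0.trans_le hα.aleph0_le
  choose o ho hxs using fun i => (mem_SAlpha_iff hα.aleph0_le).1 (hxs i)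
  have hsup : ⨆ i, o i < α.ord := Ordinal.iSup_lt_of_lt_cof (by rwa [hα.cof_ord]) ho
  refine (mem_SAlpha_iff hα.aleph0_le).2
    ⟨_, (isSuccLimit_ord hα.aleph0_le).add_one_lt hsup, ?_⟩
  exact sigma_mem_SClass_add_one (zero_lt_one.trans h1) hι xs fun i =>
    SClass_mono h1 (Ordinal.le_iSup o i) (hxs i)

end Construction

/-- the properties of `S(α)` from Construction 2.1:
`S ⊆ S(α) ⊆ T^α ∩ ⟨S⟩^{≤0}`; `Σ S(α) ⊆ S(α)`; `S(α) * S(α) = S(α)`; and any coproduct of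
fewer than `α` objects of `S(α)` lies in `S(α)`. -/
theorem statement12 (α : Cardinal.{v}) (hα : α.IsRegular)
    (G : AlphaCompactGeneration (C := C) α) (S : Set C) (hS : S ⊆ G.compacts) :
    S ⊆ SAlpha α S ∧
    SAlpha α S ⊆ G.compacts ∩ aisleGen S ∧
    (∀ x ∈ SAlpha α S, (x⟦(1 : ℤ)⟧ : C) ∈ SAlpha α S) ∧
    starSet (SAlpha α S) (SAlpha α S) = SAlpha α S ∧
    (∀ {ι : Type v}, Cardinal.mk ι < α → ∀ xs : ι → C, (∀ i, xs i ∈ SAlpha α S) →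
      (∐ xs : C) ∈ SAlpha α S) :=
  ⟨subset_SAlpha hα.aleph0_le,
    Set.subset_inter (SAlpha_subset_compacts G hS) SAlpha_subset_aisleGen,
    shift_mem_SAlpha,
    starSet_SAlpha hα.aleph0_le,
    fun hι xs hxs => sigma_mem_SAlpha hα hι xs hxs⟩
end
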